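/- Let c1 be a real number with |c1| ≤ 1 and define μ(n) = n^5 + c1*n^3 + c2*n for any real c2. Then for all integers n1, n2 with n1*n2*(n1+n2) ≠ 0, one has |μ(n1)+μ(n2)-μ(n1+n2)| ≥ |n1*n2*(n1+n2)| * ((5/2)*(n1^2+n2^2+(n1+n2)^2) - 3) ≥ 2*|n1*n2*(n1+n2)|. -/
import Mathlib


theorem resonance_lower_bound (c1 c2 : ℝ) (hc1 : |c1| ≤ 1) (n1 n2 : ℤ)
    (hn : n1 * n2 * (n1 + n2) ≠ 0) :
    |(fun n : ℤ => (n : ℝ)^5 + c1 * (n : ℝ)^3 + c2 * (n : ℝ)) n1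
        + (fun n : ℤ => (n : ℝ)^5 + c1 * (n : ℝ)^3 + c2 * (n : ℝ)) n2
        - (fun n : ℤ => (n : ℝ)^5 + c1 * (n : ℝ)^3 + c2 * (n : ℝ)) (n1 + n2)|
      ≥ |(n1 * n2 * (n1 + n2) : ℤ)|
          * ((5/2) * ((n1 : ℝ)^2 + (n2 : ℝ)^2 + ((n1 : ℝ) + (n2 : ℝ))^2) - 3)
    ∧ |(n1 * n2 * (n1 + n2) : ℤ)|
          * ((5/2) * ((n1 : ℝ)^2 + (n2 : ℝ)^2 + ((n1 : ℝ) + (n2 : ℝ))^2) - 3)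
        ≥ 2 * |(n1 * n2 * (n1 + n2) : ℤ)| := by
  simp only
  have h12 : n1 * n2 ≠ 0 := (mul_ne_zero_iff.mp hn).1
  have h1 : n1 ≠ 0 := (mul_ne_zero_iff.mp h12).1
  have h2 : n2 ≠ 0 := (mul_ne_zero_iff.mp h12).2
  set a := (n1 : ℝ) with ha'
  set b := (n2 : ℝ) with hb'
  have ha : (1 : ℝ) ≤ a ^ 2 := by
    have h : (1 : ℤ) ≤ n1 ^ 2 := by
      have := Int.one_le_abs h1
      nlinarith [sq_abs n1]
    rw [ha']; exact_mod_cast h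
  have hb : (1 : ℝ) ≤ b ^ 2 := by
    have h : (1 : ℤ) ≤ n2 ^ 2 := by
      have := Int.one_le_abs h2
      nlinarith [sq_abs n2]
    rw [hb']; exact_mod_cast h
  set P := a * b * (a + b) with hP'
  set S := a ^ 2 + b ^ 2 + (a + b) ^ 2 with hS'
  have hS : (2 : ℝ) ≤ S := by nlinarith [sq_nonneg (a + b)]
  have hPabs : ((|n1 * n2 * (n1 + n2)| : ℤ) : ℝ) = |P| := by
    have h : ((n1 * n2 * (n1 + n2) : ℤ) : ℝ) = P := by rw [hP', ha', hb']; push_cast; ring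
    rw [Int.cast_abs, h]
  rw [hPabs]
  constructor
  · have hGeq : a ^ 5 + c1 * a ^ 3 + c2 * a + (b ^ 5 + c1 * b ^ 3 + c2 * b) -
        ((↑(n1 + n2) : ℝ) ^ 5 + c1 * (↑(n1 + n2) : ℝ) ^ 3 + c2 * (↑(n1 + n2) : ℝ))
        = -((5/2) * P * S - -(3 * c1 * P)) := by
      push_cast; rw [hP', hS', ha', hb']; ring
    rw [hGeq, abs_neg]
    have htri := abs_sub_abs_le_abs_sub ((5/2) * P * S) (-(3 * c1 * P))
    have h5 : |(5/2) * P * S| = (5/2) * |P| * S := by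
      rw [abs_mul, abs_mul, abs_of_nonneg (by norm_num : (0:ℝ) ≤ 5/2),
        abs_of_nonneg (by linarith : (0:ℝ) ≤ S)]
    have h3 : |(-(3 * c1 * P))| ≤ 3 * |P| := by
      rw [abs_neg, abs_mul, abs_mul, abs_of_nonneg (by norm_num : (0:ℝ) ≤ 3)]
      nlinarith [abs_nonneg P, abs_nonneg c1]
    nlinarith [abs_nonneg P]
  · nlinarith [abs_nonneg P]
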